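/- Let G be a Hausdorff topological group and K a compact normal subgroup of G. Then G is compactly presented if and only if the quotient group G/K is compactly presented. -/

import Mathlib

/-!
A compact presentation of `G` descends to `G ⧸ K`. The compact group `K` is covered by the
closed sets `K ∩ Sⁿ`, so by Baire's theorem one of them has interior in `K`, and finitely many
translates of it put `K` inside a single ball `S^L`. Adding the words of length `≤ L` that
evaluate into `K` as relators then presents `G ⧸ K` on the image of `S`.

Conversely, let `⟨T | R⟩` be a compact presentation of `G ⧸ K`. The set `π⁻¹(T) ∪ K` is
compact because `π` is proper, and its relations of bounded length present `G`: they contain the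
multiplication table of `K`, the conjugation action of each generator on `K`, the relations
`s = s' k` between lifts of the same element of `T`, and the lifts of the relators in `R`,
corrected by an element of `K`. In the presented group the letters from `K` then span a normal
copy of `K` with quotient presented by `⟨T | R⟩`, which forces the map to `G` to be injective.
-/

open scoped Pointwise

/-- A group `G` is *boundedly presented* by a subset `S ⊆ G` if there are an integer `n` and a
set `R` of words of length at most `n` in the letters `S ∪ S⁻¹`, each representing the identity
in `G`, such that the canonical homomorphism from the quotient of the free group on `S` by the
normal closure of `R` onto `G` is an isomorphism. -/
def BoundedlyPresentedBy (G : Type*) [Group G] (S : Set G) : Prop :=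
  ∃ (n : ℕ) (R : Set (FreeGroup S)),
    (∀ r ∈ R, ∃ w : List (S × Bool), FreeGroup.mk w = r ∧ w.length ≤ n) ∧
    Function.Surjective (FreeGroup.lift (fun s : S => (s : G))) ∧
    MonoidHom.ker (FreeGroup.lift (fun s : S => (s : G))) = Subgroup.normalClosure R

/-- A topological group is *compactly presented* if it is boundedly presented by some compact
subset. -/
def CompactlyPresented (G : Type*) [Group G] [TopologicalSpace G] : Prop :=
  ∃ S : Set G, IsCompact S ∧ BoundedlyPresentedBy G S

namespace FreeGroup

variable {α β : Type*}

def wordBall (α : Type*) (n : ℕ) : Set (FreeGroup α) :=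
  {x | ∃ w : List (α × Bool), mk w = x ∧ w.length ≤ n}

theorem one_mem_wordBall (n : ℕ) : (1 : FreeGroup α) ∈ wordBall α n :=
  ⟨[], rfl, Nat.zero_le n⟩

theorem of_mem_wordBall_one (a : α) : of a ∈ wordBall α 1 :=
  ⟨[(a, true)], rfl, le_rfl⟩

theorem wordBall_mono : Monotone (wordBall α) := fun _ _ hmn _ ⟨w, hw, hlen⟩ =>
  ⟨w, hw, hlen.trans hmn⟩

theorem mul_mem_wordBall {m n : ℕ} {x y : FreeGroup α} (hx : x ∈ wordBall α m)
    (hy : y ∈ wordBall α n) : x * y ∈ wordBall α (m + n) := by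
  obtain ⟨w, rfl, hw⟩ := hx
  obtain ⟨v, rfl, hv⟩ := hy
  exact ⟨w ++ v, mul_mk.symm, by rw [List.length_append]; omega⟩

theorem inv_mem_wordBall {n : ℕ} {x : FreeGroup α} (hx : x ∈ wordBall α n) :
    x⁻¹ ∈ wordBall α n := by
  obtain ⟨w, rfl, hw⟩ := hx
  exact ⟨invRev w, inv_mk.symm, by rwa [invRev_length]⟩

theorem map_mem_wordBall (f : α → β) {n : ℕ} {x : FreeGroup α} (hx : x ∈ wordBall α n) :
    map f x ∈ wordBall β n := by
  obtain ⟨w, rfl, hw⟩ := hx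
  exact ⟨w.map fun p => (f p.1, p.2), map.mk.symm, by rwa [List.length_map]⟩

theorem exists_mem_wordBall (x : FreeGroup α) : ∃ n, x ∈ wordBall α n := by
  induction x using FreeGroup.induction_on with
  | C1 => exact ⟨0, one_mem_wordBall 0⟩
  | of a => exact ⟨1, of_mem_wordBall_one a⟩
  | inv_of a _ => exact ⟨1, inv_mem_wordBall (of_mem_wordBall_one a)⟩
  | mul x y hx hy =>
    obtain ⟨m, hm⟩ := hx
    obtain ⟨n, hn⟩ := hy
    exact ⟨m + n, mul_mem_wordBall hm hn⟩

theorem wordBall_zero : wordBall α 0 = 1 := by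
  refine subset_antisymm ?_ fun x hx => ?_
  · rintro x ⟨w, rfl, hw⟩
    rw [List.length_eq_zero_iff.mp (Nat.le_zero.mp hw)]
    rfl
  · rw [Set.mem_one.mp hx]
    exact one_mem_wordBall 0

theorem wordBall_one : wordBall α 1 = insert 1 (Set.range of ∪ (Set.range of)⁻¹) := by
  refine subset_antisymm ?_ ?_
  · rintro x ⟨w, rfl, hw⟩
    match w, hw with
    | [], _ => exact Or.inl rfl
    | [(a, true)], _ => exact Or.inr (Or.inl ⟨a, rfl⟩)
    | [(a, false)], _ => exact Or.inr (Or.inr ⟨a, by rw [inv_mk]; rfl⟩)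
  · rintro x (rfl | ⟨a, rfl⟩ | ⟨a, hx⟩)
    · exact one_mem_wordBall 1
    · exact of_mem_wordBall_one a
    · rw [← inv_inv x, ← hx]
      exact inv_mem_wordBall (of_mem_wordBall_one a)

theorem wordBall_eq_pow (n : ℕ) : wordBall α n = wordBall α 1 ^ n := by
  induction n with
  | zero => exact wordBall_zero
  | succ n ih =>
    refine subset_antisymm ?_ ?_
    · rintro x ⟨w, rfl, hw⟩
      rw [pow_succ', ← ih]
      match w, hw with
      | [], _ => exact ⟨1, one_mem_wordBall 1, 1, one_mem_wordBall n, mul_one 1⟩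
      | p :: w, hw =>
        exact ⟨mk [p], ⟨[p], rfl, le_rfl⟩, mk w, ⟨w, rfl, by simpa using hw⟩, mul_mk⟩
    · rw [pow_succ', ← ih, add_comm]
      rintro _ ⟨x, hx, y, hy, rfl⟩
      exact mul_mem_wordBall hx hy

theorem lift_image_wordBall {G : Type*} [Group G] (f : α → G) (n : ℕ) :
    lift f '' wordBall α n = insert 1 (Set.range f ∪ (Set.range f)⁻¹) ^ n := by
  rw [wordBall_eq_pow, Set.image_pow, wordBall_one, Set.image_insert_eq, Set.image_union,
    Set.image_inv, ← Set.range_comp, _root_.map_one]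
  simp only [Function.comp_def, lift_apply_of]

end FreeGroup

open Subgroup
open FreeGroup (wordBall wordBall_mono mul_mem_wordBall inv_mem_wordBall of_mem_wordBall_one
  map_mem_wordBall exists_mem_wordBall lift_image_wordBall)

section BoundedPresentation

variable {α β G : Type*} [Group G]

def IsBoundedPresentation (φ : FreeGroup α →* G) : Prop :=
  Function.Surjective φ ∧ ∃ n, φ.ker ≤ normalClosure (wordBall α n ∩ φ.ker)

theorem boundedlyPresentedBy_iff (S : Set G) :
    BoundedlyPresentedBy G S ↔ IsBoundedPresentation (FreeGroup.lift fun s : S => (s : G)) := by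
  constructor
  · rintro ⟨n, R, hR, hsurj, hker⟩
    refine ⟨hsurj, n, hker.le.trans (normalClosure_mono fun r hr => ⟨hR r hr, ?_⟩)⟩
    exact hker ▸ subset_normalClosure hr
  · rintro ⟨hsurj, n, hker⟩
    exact ⟨n, _, fun r hr => hr.1, hsurj,
      le_antisymm hker (normalClosure_le_normal Set.inter_subset_right)⟩

theorem IsBoundedPresentation.comp_mk {φ : FreeGroup α →* G} (hφ : IsBoundedPresentation φ)
    {N : Subgroup G} [N.Normal] {L : ℕ} (hN : (N : Set G) ⊆ φ '' wordBall α L) :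
    IsBoundedPresentation ((QuotientGroup.mk' N).comp φ) := by
  obtain ⟨hsurj, n, hker⟩ := hφ
  set ψ := (QuotientGroup.mk' N).comp φ
  have mem_ker_ψ (x) : x ∈ ψ.ker ↔ φ x ∈ N := QuotientGroup.eq_one_iff _
  refine ⟨(QuotientGroup.mk'_surjective N).comp hsurj, n + L, fun x hx => ?_⟩
  obtain ⟨w, hw, hwx⟩ := hN ((mem_ker_ψ x).mp hx)
  have hxw : x * w⁻¹ ∈ φ.ker := by simp [MonoidHom.mem_ker, hwx]
  have hker_le : φ.ker ≤ ψ.ker := fun y hy => (mem_ker_ψ y).mpr (hy ▸ N.one_mem)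
  have hmono : normalClosure (wordBall α n ∩ φ.ker) ≤
      normalClosure (wordBall α (n + L) ∩ ψ.ker) :=
    normalClosure_mono (Set.inter_subset_inter (wordBall_mono (Nat.le_add_right n L)) hker_le)
  have hw' : w ∈ normalClosure (wordBall α (n + L) ∩ ψ.ker) :=
    subset_normalClosure ⟨wordBall_mono (Nat.le_add_left L n) hw,
      (mem_ker_ψ w).mpr (hwx ▸ (mem_ker_ψ x).mp hx)⟩
  simpa using mul_mem (hmono (hker hxw)) hw'

theorem IsBoundedPresentation.of_comp_map {f : α → β} (hf : Function.Surjective f)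
    {ψ : FreeGroup β →* G} (h : IsBoundedPresentation (ψ.comp (FreeGroup.map f))) :
    IsBoundedPresentation ψ := by
  obtain ⟨hsurj, n, hker⟩ := h
  refine ⟨Function.Surjective.of_comp hsurj, n, fun y hy => ?_⟩
  obtain ⟨x, rfl⟩ := FreeGroup.map_surjective hf y
  have hle : normalClosure (wordBall α n ∩ (ψ.comp (FreeGroup.map f)).ker) ≤
      (normalClosure (wordBall β n ∩ ψ.ker)).comap (FreeGroup.map f) :=
    normalClosure_le_normal fun r hr => subset_normalClosure ⟨map_mem_wordBall f hr.1, hr.2⟩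
  exact hle (hker hy)

end BoundedPresentation

section Extension

variable {G : Type*} [Group G] (K : Subgroup G) (T : Set (G ⧸ K))

def liftGenerators : Set G := QuotientGroup.mk ⁻¹' T ∪ K

namespace LiftGenerators

local notation "S" => liftGenerators K T
local notation "φ" => FreeGroup.lift (fun s : liftGenerators K T => (s : G))
local notation "ψ" => FreeGroup.lift (fun t : T => (t : G ⧸ K))

variable {K T} in
def ofKer (k : K) : S := ⟨k, Or.inr k.2⟩

variable {K T} in
noncomputable def ofQuot (t : T) : S := ⟨(t : G ⧸ K).out, Or.inl (by simp)⟩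

noncomputable def liftWord : FreeGroup T →* FreeGroup S := FreeGroup.map ofQuot

open scoped Classical in
noncomputable def projectWord : FreeGroup S →* FreeGroup T :=
  FreeGroup.lift fun s => if h : (s : G ⧸ K) ∈ T then FreeGroup.of ⟨s, h⟩ else 1

variable (n : ℕ)

-- Lifted relators of `G ⧸ K` have length `≤ n + 1`, the other relations used length `≤ 4`.
def relations : Subgroup (FreeGroup S) := normalClosure (wordBall S (n + 4) ∩ (φ).ker)

instance : (relations K T n).Normal := normalClosure_normal

local notation "Q" => FreeGroup (liftGenerators K T) ⧸ relations K T n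

variable {K T n} in
theorem mk_eq_mk_of_eval_eq {x y : FreeGroup S} {a b : ℕ} (hx : x ∈ wordBall S a)
    (hy : y ∈ wordBall S b) (hab : a + b ≤ n + 4) (h : φ x = φ y) : (x : Q) = y := by
  refine QuotientGroup.eq.mpr (subset_normalClosure ⟨?_, ?_⟩)
  · exact wordBall_mono hab (mul_mem_wordBall (inv_mem_wordBall hx) hy)
  · simp [MonoidHom.mem_ker, h]

def kerEmbedding : K →* Q :=
  MonoidHom.mk' (fun k => ((FreeGroup.of (ofKer k) : FreeGroup S) : Q)) fun a b => by
    rw [← QuotientGroup.mk_mul]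
    exact mk_eq_mk_of_eval_eq (of_mem_wordBall_one _)
      (mul_mem_wordBall (of_mem_wordBall_one _) (of_mem_wordBall_one _)) (by omega)
      (by simp [ofKer])

theorem kerEmbedding_apply (k : K) :
    kerEmbedding K T n k = ((FreeGroup.of (ofKer k) : FreeGroup S) : Q) := rfl

theorem relations_le_ker : relations K T n ≤ (φ).ker :=
  normalClosure_le_normal Set.inter_subset_right

theorem lift_kerEmbedding (k : K) :
    QuotientGroup.lift _ φ (relations_le_ker K T n) (kerEmbedding K T n k) = k := by
  simp [kerEmbedding_apply, ofKer]

variable [K.Normal]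

theorem mk_eval_liftWord (y : FreeGroup T) : (φ (liftWord K T y) : G ⧸ K) = ψ y := by
  have : (QuotientGroup.mk' K).comp ((φ).comp (liftWord K T)) = ψ :=
    FreeGroup.ext_hom _ _ fun t => by simp [liftWord, ofQuot]
  exact DFunLike.congr_fun this y

theorem lift_projectWord (x : FreeGroup S) : ψ (projectWord K T x) = φ x := by
  have : (ψ).comp (projectWord K T) = (QuotientGroup.mk' K).comp φ := by
    refine FreeGroup.ext_hom _ _ fun s => ?_
    by_cases h : (s : G ⧸ K) ∈ T
    · simp [projectWord, h]
    · simp only [projectWord, MonoidHom.comp_apply, FreeGroup.lift_apply_of, dif_neg h,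
        _root_.map_one, QuotientGroup.mk'_apply]
      exact ((QuotientGroup.eq_one_iff _).mpr (s.2.resolve_left h)).symm
  exact DFunLike.congr_fun this x

theorem mk_of_mul_kerEmbedding (s : S) (k : K) :
    (FreeGroup.of s : Q) * kerEmbedding K T n k =
      kerEmbedding K T n (MulAut.conjNormal (s : G) k) * (FreeGroup.of s : Q) := by
  simp only [kerEmbedding_apply, ← QuotientGroup.mk_mul]
  exact mk_eq_mk_of_eval_eq (mul_mem_wordBall (of_mem_wordBall_one _) (of_mem_wordBall_one _))
    (mul_mem_wordBall (of_mem_wordBall_one _) (of_mem_wordBall_one _)) (by omega)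
    (by simp [ofKer])

theorem mk_conj_kerEmbedding (x : FreeGroup S) (k : K) :
    (x : Q) * kerEmbedding K T n k * (x : Q)⁻¹ =
      kerEmbedding K T n (MulAut.conjNormal (φ x) k) := by
  induction x using FreeGroup.induction_on generalizing k with
  | C1 => simp
  | of s => rw [mk_of_mul_kerEmbedding, mul_inv_cancel_right, FreeGroup.lift_apply_of]
  | inv_of s _ =>
    have := mk_of_mul_kerEmbedding K T n s ((MulAut.conjNormal (s : G))⁻¹ k)
    rw [MulAut.apply_inv_self] at this
    simp only [QuotientGroup.mk_inv, inv_inv, map_inv, FreeGroup.lift_apply_of]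
    rw [mul_assoc, ← this, inv_mul_cancel_left]
  | mul x y ihx ihy =>
    simp only [QuotientGroup.mk_mul, _root_.map_mul, MulAut.mul_apply, ← ihx, ← ihy]
    group

instance : (kerEmbedding K T n).range.Normal where
  conj_mem := by
    rintro _ ⟨k, rfl⟩ q
    obtain ⟨x, rfl⟩ := QuotientGroup.mk_surjective q
    exact ⟨_, (mk_conj_kerEmbedding K T n x k).symm⟩

local notation "E" => MonoidHom.range (kerEmbedding K T n)

theorem mk_liftWord_projectWord (x : FreeGroup S) :
    (((liftWord K T (projectWord K T x) : FreeGroup S) : Q) : Q ⧸ E) = ((x : Q) : Q ⧸ E) := by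
  let χ := (QuotientGroup.mk' E).comp (QuotientGroup.mk' (relations K T n))
  have : χ.comp ((liftWord K T).comp (projectWord K T)) = χ := by
    refine FreeGroup.ext_hom _ _ fun s => ?_
    by_cases h : (s : G ⧸ K) ∈ T
    · set s' := ofQuot (K := K) ⟨(s : G ⧸ K), h⟩
      have hk : (s' : G)⁻¹ * s ∈ K := QuotientGroup.eq.mp (by simp [s', ofQuot])
      have hs : (FreeGroup.of s : Q) = FreeGroup.of s' * kerEmbedding K T n ⟨_, hk⟩ := by
        rw [kerEmbedding_apply, ← QuotientGroup.mk_mul]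
        exact mk_eq_mk_of_eval_eq (of_mem_wordBall_one _)
          (mul_mem_wordBall (of_mem_wordBall_one _) (of_mem_wordBall_one _)) (by omega)
          (by simp [ofKer])
      simp [χ, projectWord, liftWord, h, hs, s']
    · have hs : ((FreeGroup.of s : Q) : Q ⧸ E) = 1 :=
        (QuotientGroup.eq_one_iff _).mpr ⟨⟨s, s.2.resolve_left h⟩, rfl⟩
      simp [χ, projectWord, h, hs]
  exact DFunLike.congr_fun this x

variable {n} in
theorem mk_liftWord_mem_range {r : FreeGroup T} (hr : r ∈ wordBall T n) (hψ : ψ r = 1) :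
    ((liftWord K T r : FreeGroup S) : Q) ∈ E := by
  have hk : φ (liftWord K T r) ∈ K :=
    (QuotientGroup.eq_one_iff _).mp ((mk_eval_liftWord K T r).trans hψ)
  refine ⟨⟨_, hk⟩, ?_⟩
  rw [kerEmbedding_apply]
  exact mk_eq_mk_of_eval_eq (of_mem_wordBall_one _) (map_mem_wordBall _ hr) (by omega)
    (by simp [ofKer])

theorem eval_surjective (hsurj : Function.Surjective ψ) : Function.Surjective φ := by
  intro g
  obtain ⟨y, hy⟩ := hsurj g
  have hk : (φ (liftWord K T y))⁻¹ * g ∈ K :=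
    QuotientGroup.eq.mp ((mk_eval_liftWord K T y).trans hy)
  exact ⟨liftWord K T y * FreeGroup.of (ofKer ⟨_, hk⟩), by simp [ofKer]⟩

variable {n} in
theorem mem_relations_of_eval_eq_one (hker : (ψ).ker ≤ normalClosure (wordBall T n ∩ (ψ).ker))
    {w : FreeGroup S} (hw : φ w = 1) : w ∈ relations K T n := by
  let χ := (QuotientGroup.mk' E).comp (QuotientGroup.mk' (relations K T n))
  have hle : normalClosure (wordBall T n ∩ (ψ).ker) ≤ (χ.comp (liftWord K T)).ker :=
    normalClosure_le_normal fun r hr =>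
      (QuotientGroup.eq_one_iff _).mpr (mk_liftWord_mem_range K T hr.1 hr.2)
  have hχ : ((w : Q) : Q ⧸ E) = 1 := by
    rw [← mk_liftWord_projectWord]
    exact hle (hker (by rw [MonoidHom.mem_ker, lift_projectWord, hw]; rfl))
  obtain ⟨k, hk⟩ := (QuotientGroup.eq_one_iff _).mp hχ
  have hk1 : k = 1 := Subtype.ext <| by
    simpa [lift_kerEmbedding, hw] using
      congrArg (QuotientGroup.lift _ _ (relations_le_ker K T n)) hk
  exact (QuotientGroup.eq_one_iff w).mp (hk.symm.trans (by rw [hk1, map_one]))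

end LiftGenerators

open LiftGenerators in
theorem isBoundedPresentation_liftGenerators [K.Normal]
    (h : IsBoundedPresentation (FreeGroup.lift fun t : T => (t : G ⧸ K))) :
    IsBoundedPresentation (FreeGroup.lift fun s : liftGenerators K T => (s : G)) := by
  obtain ⟨hsurj, n, hker⟩ := h
  exact ⟨eval_surjective K T hsurj, n + 4, fun w hw => mem_relations_of_eval_eq_one K T hker hw⟩

end Extension

section Topology

variable {α G : Type*} [Group G] [TopologicalSpace G] [IsTopologicalGroup G]

theorem exists_eq_univ_of_iUnion_isClosed {H : Type*} [Group H] [TopologicalSpace H]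
    [IsTopologicalGroup H] [CompactSpace H] {B : ℕ → Set H} (hB : ∀ n, IsClosed (B n))
    (hB_mono : Monotone B) (hB_mul : ∀ m n, B m * B n ⊆ B (m + n))
    (hB_cover : ⋃ n, B n = .univ) : ∃ L, B L = .univ := by
  obtain ⟨m, hm⟩ := nonempty_interior_of_iUnion_of_closed hB hB_cover
  obtain ⟨t, ht⟩ := compact_covered_by_mul_left_translates isCompact_univ hm
  choose k hk using fun g : H => Set.mem_iUnion.mp (hB_cover ▸ Set.mem_univ g⁻¹)
  refine ⟨t.sup k + m, Set.eq_univ_of_forall fun h => ?_⟩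
  obtain ⟨g, hg, hgh⟩ := Set.mem_iUnion₂.mp (ht (Set.mem_univ h))
  have hmem := hB_mul _ _ (Set.mul_mem_mul (hk g) hgh)
  rw [inv_mul_cancel_left] at hmem
  exact hB_mono (Nat.add_le_add_right (Finset.le_sup hg) m) hmem

theorem isCompact_lift_image_wordBall {f : α → G} (hf : IsCompact (Set.range f)) (n : ℕ) :
    IsCompact (FreeGroup.lift f '' wordBall α n) := by
  rw [lift_image_wordBall]
  have hC : IsCompact (insert 1 (Set.range f ∪ (Set.range f)⁻¹)) := (hf.union hf.inv).insert 1
  induction n with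
  | zero => exact isCompact_singleton
  | succ n ih => rw [pow_succ]; exact ih.mul hC

theorem exists_subset_lift_image_wordBall [T2Space G] {f : α → G} (hf : IsCompact (Set.range f))
    (hsurj : Function.Surjective (FreeGroup.lift f)) {K : Subgroup G} (hK : IsCompact (K : Set G)) :
    ∃ L, (K : Set G) ⊆ FreeGroup.lift f '' wordBall α L := by
  have : CompactSpace K := isCompact_iff_compactSpace.mp hK
  let B n : Set K := Subtype.val ⁻¹' (FreeGroup.lift f '' wordBall α n)
  have hB_mul m n : B m * B n ⊆ B (m + n) := by
    rintro _ ⟨_, ⟨x, hx, hxa⟩, _, ⟨y, hy, hyb⟩, rfl⟩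
    exact ⟨x * y, mul_mem_wordBall hx hy, by simp [hxa, hyb]⟩
  have hB_cover : ⋃ n, B n = .univ := Set.eq_univ_of_forall fun k => by
    obtain ⟨x, hx⟩ := hsurj k
    obtain ⟨n, hn⟩ := exists_mem_wordBall x
    exact Set.mem_iUnion.mpr ⟨n, x, hn, hx⟩
  obtain ⟨L, hL⟩ := exists_eq_univ_of_iUnion_isClosed
    (fun n => (isCompact_lift_image_wordBall hf n).isClosed.preimage continuous_subtype_val)
    (fun m n hmn => Set.preimage_mono (Set.image_mono (wordBall_mono hmn))) hB_mul hB_cover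
  exact ⟨L, fun k hk => Set.eq_univ_iff_forall.mp hL ⟨k, hk⟩⟩

theorem QuotientGroup.isProperMap_mk_of_isCompact {K : Subgroup G} (hK : IsCompact (K : Set G)) :
    IsProperMap (QuotientGroup.mk : G → G ⧸ K) := by
  refine isProperMap_iff_isClosedMap_and_compact_fibers.mpr
    ⟨QuotientGroup.continuous_mk, QuotientGroup.isClosedMap_coe hK, fun q => ?_⟩
  obtain ⟨g, rfl⟩ := QuotientGroup.mk_surjective q
  rw [← Set.image_singleton, QuotientGroup.preimage_image_mk_eq_mul]
  exact isCompact_singleton.mul hK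

theorem CompactlyPresented.quotient [T2Space G] {K : Subgroup G} [K.Normal]
    (hK : IsCompact (K : Set G)) (h : CompactlyPresented G) : CompactlyPresented (G ⧸ K) := by
  obtain ⟨S, hS, hpres⟩ := h
  rw [boundedlyPresentedBy_iff] at hpres
  obtain ⟨L, hL⟩ := exists_subset_lift_image_wordBall (by simpa using hS) hpres.1 hK
  let π : G → G ⧸ K := QuotientGroup.mk
  refine ⟨π '' S, hS.image QuotientGroup.continuous_mk,
    (boundedlyPresentedBy_iff _).mpr (.of_comp_map (Set.imageFactorization_surjective) ?_)⟩
  have hcomm : (FreeGroup.lift fun t : π '' S => (t : G ⧸ K)).comp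
      (FreeGroup.map (Set.imageFactorization π S)) =
      (QuotientGroup.mk' K).comp (FreeGroup.lift fun s : S => (s : G)) :=
    FreeGroup.ext_hom _ _ fun s => by simp [Set.imageFactorization, π]
  exact hcomm ▸ hpres.comp_mk hL

theorem CompactlyPresented.of_quotient {K : Subgroup G} [K.Normal] (hK : IsCompact (K : Set G))
    (h : CompactlyPresented (G ⧸ K)) : CompactlyPresented G := by
  obtain ⟨T, hT, hpres⟩ := h
  refine ⟨liftGenerators K T,
    ((QuotientGroup.isProperMap_mk_of_isCompact hK).isCompact_preimage hT).union hK, ?_⟩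
  rw [boundedlyPresentedBy_iff] at hpres ⊢
  exact isBoundedPresentation_liftGenerators K T hpres

end Topology

/-- for a compact normal subgroup `K` of a Hausdorff topological group `G`, the
group `G` is compactly presented if and only if `G / K` is. -/
theorem compactlyPresented_iff_quotient_compact {G : Type*} [Group G] [TopologicalSpace G]
    [IsTopologicalGroup G] [T2Space G]
    (K : Subgroup G) [K.Normal] (hK : IsCompact (K : Set G)) :
    CompactlyPresented G ↔ CompactlyPresented (G ⧸ K) :=
  ⟨CompactlyPresented.quotient hK, CompactlyPresented.of_quotient hK⟩
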